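/- Let G be a total k-uniform graph. Then either G is the disjoint union of k/2 stars, or G has girth at most 6 (i.e., G contains a cycle of length at most 6). -/

import Mathlib

open SimpleGraph

/-- `A ⊆ V(G)` is a total dominating set of `G`: every vertex has a neighbor in `A`. -/
def TotalDomSet {V : Type*} (G : SimpleGraph V) (A : Set V) : Prop :=
  ∀ v : V, ∃ a ∈ A, G.Adj v a

/-- `s` is a legal (open neighborhood) sequence of `G`: the vertices are distinct and every
vertex after the first has a neighbor adjacent to no vertex preceding it in the sequence. -/
def LegalSeq {V : Type*} (G : SimpleGraph V) (s : List V) : Prop :=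
  s.Nodup ∧ ∀ (i : ℕ) (h : i < s.length), 0 < i →
    ∃ w : V, G.Adj (s.get ⟨i, h⟩) w ∧ ∀ u ∈ s.take i, ¬ G.Adj u w

/-- `s` is a total dominating sequence of `G`: a legal sequence whose underlying set is a
total dominating set. -/
def TotalDomSeq {V : Type*} (G : SimpleGraph V) (s : List V) : Prop :=
  LegalSeq G s ∧ TotalDomSet G {v | v ∈ s}

/-- The total domination number `γ_t(G)`: the minimum size of a total dominating set. -/
noncomputable def totalDomNum {V : Type*} (G : SimpleGraph V) : ℕ :=
  sInf {n | ∃ A : Set V, TotalDomSet G A ∧ A.ncard = n}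

/-- The Grundy total domination number `γ_gr^t(G)`: the maximum length of a total dominating
sequence. -/
noncomputable def grundyTotalDomNum {V : Type*} (G : SimpleGraph V) : ℕ :=
  sSup {n | ∃ s : List V, TotalDomSeq G s ∧ s.length = n}

/-- `G` is total `k`-uniform if `γ_t(G) = γ_gr^t(G) = k`. -/
def TotalKUniform {V : Type*} (G : SimpleGraph V) (k : ℕ) : Prop :=
  totalDomNum G = k ∧ grundyTotalDomNum G = k

/-- `G` has no isolated vertices. -/
def NoIsolatedVerts {V : Type*} (G : SimpleGraph V) : Prop :=
  ∀ v : V, ∃ w : V, G.Adj v w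

/-- The closed neighborhood `N[v] = N(v) ∪ {v}`. -/
def closedNbhd {V : Type*} (G : SimpleGraph V) (v : V) : Set V :=
  insert v (G.neighborSet v)

/-- `G` is false twin-free: no two distinct vertices have the same (open) neighborhood. -/
def FalseTwinFree {V : Type*} (G : SimpleGraph V) : Prop :=
  ∀ u v : V, u ≠ v → G.neighborSet u ≠ G.neighborSet v

/-- `G` is the disjoint union of `m` stars: `f` assigns each vertex its star, each star `i`
has a center `center i` and at least one other vertex, and two vertices are adjacent iff they
are distinct, lie in the same star, and one of them is its center. -/
def DisjUnionStars {V : Type*} (G : SimpleGraph V) (m : ℕ) : Prop :=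
  ∃ (f : V → Fin m) (center : Fin m → V),
    (∀ i : Fin m, f (center i) = i) ∧
    (∀ i : Fin m, ∃ v : V, f v = i ∧ v ≠ center i) ∧
    (∀ u v : V, G.Adj u v ↔
      (u ≠ v ∧ f u = f v ∧ (u = center (f u) ∨ v = center (f v))))

/-!
In a total `k`-uniform graph every legal sequence has length at most `k`, while every total
dominating set has at least `k` vertices. Hence no open neighbourhood strictly contains another:
a legal sequence `u, v, …` completed to a total dominating sequence would stay total dominating
after dropping `u`. If moreover the girth exceeds 6, every vertex `x` outside a minimum total
dominating set `D` is a leaf: otherwise `x` followed by all of `D` can be ordered into a legal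
sequence of length `k + 1`, unless a cycle of length at most 6 passes through `x`. It follows that
every edge has a leaf endpoint, i.e. `G` is a disjoint union of stars, and a minimum total
dominating set consists of the centres together with one leaf of each star.
-/

section

variable {V : Type*} {G : SimpleGraph V}

def IsLeaf (G : SimpleGraph V) (v : V) : Prop := ∃ c, G.neighborSet v = {c}

def HasUndominatedNeighbor (G : SimpleGraph V) (S : Set V) (e : V) : Prop :=
  ∃ w, G.Adj e w ∧ ∀ u ∈ S, ¬ G.Adj u w

lemma eq_of_neighborSet_eq_singleton {v c t : V} (hv : G.neighborSet v = {c}) (hvt : G.Adj v t) :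
    t = c := by
  simpa [hv] using (show t ∈ G.neighborSet v from hvt)

lemma IsLeaf.neighborSet_eq {v t : V} (hv : IsLeaf G v) (hvt : G.Adj v t) :
    G.neighborSet v = {t} := by
  obtain ⟨c, hc⟩ := hv
  rwa [eq_of_neighborSet_eq_singleton hc hvt]

lemma exists_adj_ne_of_neighborSet_ne {v w : V} (hvw : G.Adj v w) (h : G.neighborSet v ≠ {w}) :
    ∃ y, G.Adj v y ∧ y ≠ w := by
  by_contra! hy
  exact h (Set.eq_singleton_iff_unique_mem.2 ⟨hvw, hy⟩)

lemma HasUndominatedNeighbor.mono {S S' : Set V} {e : V} (h : HasUndominatedNeighbor G S e)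
    (hS : S' ⊆ S) : HasUndominatedNeighbor G S' e :=
  let ⟨w, hew, hw⟩ := h
  ⟨w, hew, fun u hu => hw u (hS hu)⟩

lemma TotalDomSet.of_forall_not_hasUndominatedNeighbor {D S : Set V} (hD : TotalDomSet G D)
    (h : ∀ e ∈ D, e ∉ S → ¬ HasUndominatedNeighbor G S e) : TotalDomSet G S := by
  intro v
  obtain ⟨a, haD, hva⟩ := hD v
  by_cases haS : a ∈ S
  · exact ⟨a, haS, hva⟩
  · by_contra! hv
    exact h a haD haS ⟨v, hva.symm, fun u hu huv => hv u hu huv.symm⟩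

lemma ncard_setOf_mem_le (s : List V) : {a | a ∈ s}.ncard ≤ s.length := by
  classical
  rw [← List.coe_toFinset, Set.ncard_coe_finset]
  exact List.toFinset_card_le s

section Girth

lemma egirth_le_three {a b c : V} (hab : G.Adj a b) (hbc : G.Adj b c) (hca : G.Adj c a) :
    G.egirth ≤ 3 := by
  have hcyc : (Walk.cons hab (Walk.cons hbc (Walk.cons hca Walk.nil))).IsCycle := by
    simp [Walk.isCycle_def, Walk.isTrail_def, hab.ne, hbc.ne, hca.ne, hab.ne', hca.ne']
  simpa using egirth_le_length hcyc

lemma egirth_le_four {a b c d : V} (hab : G.Adj a b) (hbc : G.Adj b c) (hcd : G.Adj c d)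
    (hda : G.Adj d a) (hac : a ≠ c) (hbd : b ≠ d) : G.egirth ≤ 4 := by
  have hcyc : (Walk.cons hab (Walk.cons hbc (Walk.cons hcd (Walk.cons hda Walk.nil)))).IsCycle := by
    simp [Walk.isCycle_def, Walk.isTrail_def, hab.ne, hbc.ne, hcd.ne, hda.ne, hab.ne', hda.ne',
      hac, hbd, hac.symm]
  simpa using egirth_le_length hcyc

lemma egirth_le_six {a b c d e f : V} (hab : G.Adj a b) (hbc : G.Adj b c) (hcd : G.Adj c d)
    (hde : G.Adj d e) (hef : G.Adj e f) (hfa : G.Adj f a) (hac : a ≠ c) (had : a ≠ d)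
    (hae : a ≠ e) (hbd : b ≠ d) (hbe : b ≠ e) (hbf : b ≠ f) (hce : c ≠ e) (hcf : c ≠ f)
    (hdf : d ≠ f) : G.egirth ≤ 6 := by
  have hcyc : (Walk.cons hab (Walk.cons hbc (Walk.cons hcd (Walk.cons hde
      (Walk.cons hef (Walk.cons hfa Walk.nil)))))).IsCycle := by
    simp [Walk.isCycle_def, Walk.isTrail_def, hab.ne, hbc.ne, hcd.ne, hde.ne, hef.ne, hfa.ne,
      hab.ne', hfa.ne', hac, had, hae, hbd, hbe, hbf, hce, hcf, hdf, hac.symm, had.symm, hae.symm]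
  simpa using egirth_le_length hcyc

end Girth

section LegalSeq

lemma legalSeq_singleton (x : V) : LegalSeq G [x] :=
  ⟨List.nodup_singleton x, fun i hi hpos => by simp at hi; omega⟩

lemma LegalSeq.append_singleton {s : List V} {e : V} (hs : LegalSeq G s) (he : e ∉ s)
    (hnew : HasUndominatedNeighbor G {a | a ∈ s} e) : LegalSeq G (s ++ [e]) := by
  refine ⟨hs.1.append (List.nodup_singleton e) (by simpa using he), fun i hi hpos => ?_⟩
  rcases (Nat.lt_succ_iff.1 (by simpa using hi)).lt_or_eq with hi' | rfl
  · obtain ⟨w, hw, hfresh⟩ := hs.2 i hi' hpos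
    refine ⟨w, by simpa [List.getElem_append_left hi'] using hw, ?_⟩
    rwa [List.take_append_of_le_length hi'.le]
  · obtain ⟨w, hw, hfresh⟩ := hnew
    exact ⟨w, by simpa using hw, by simpa using hfresh⟩

lemma LegalSeq.exists_append [Finite V] {s : List V} (hs : LegalSeq G s) {R : Set V}
    (hRs : ∀ e ∈ R, e ∉ s)
    (hR : ∀ T ⊆ R, T.Nonempty →
      ∃ e ∈ T, HasUndominatedNeighbor G ({a | a ∈ s} ∪ (R \ T)) e) :
    ∃ z, LegalSeq G (s ++ z) ∧ ∀ a, a ∈ z ↔ a ∈ R := by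
  rcases R.eq_empty_or_nonempty with rfl | hRne
  · exact ⟨[], by simpa using hs, by simp⟩
  obtain ⟨e, heR, hnew⟩ := hR R subset_rfl hRne
  have hs' : LegalSeq G (s ++ [e]) := hs.append_singleton (hRs e heR) (hnew.mono (by simp))
  have hlt : (R \ {e}).ncard < R.ncard := Set.ncard_sdiff_singleton_lt_of_mem heR
  obtain ⟨z, hz, hzR⟩ := hs'.exists_append (R := R \ {e})
    (fun a ha => by simpa [not_or] using ⟨hRs a ha.1, ha.2⟩)
    fun T hT hTne => by
      obtain ⟨e', he'T, hnew'⟩ := hR T (hT.trans Set.sdiff_subset) hTne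
      refine ⟨e', he'T, hnew'.mono ?_⟩
      rintro a (ha | ⟨⟨haR, hae⟩, haT⟩)
      · simp only [Set.mem_ofPred_eq, List.mem_append, List.mem_singleton] at ha
        rcases ha with ha | rfl
        · exact Or.inl ha
        · exact Or.inr ⟨heR, fun haT => (hT haT).2 rfl⟩
      · exact Or.inr ⟨haR, haT⟩
  refine ⟨e :: z, by simpa using hz, fun a => ?_⟩
  by_cases hae : a = e
  · simp [hae, heR]
  · simp [hae, hzR]
termination_by R.ncard

lemma LegalSeq.exists_totalDomSeq_append [Finite V] (hiso : NoIsolatedVerts G) {s : List V}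
    (hs : LegalSeq G s) : ∃ z, TotalDomSeq G (s ++ z) := by
  by_cases hT : TotalDomSet G {a | a ∈ s}
  · exact ⟨[], by rw [List.append_nil]; exact ⟨hs, hT⟩⟩
  obtain ⟨v, hv⟩ : ∃ v, ∀ a ∈ s, ¬ G.Adj v a := by simpa [TotalDomSet] using hT
  obtain ⟨w, hvw⟩ := hiso v
  have hw : w ∉ s := fun h => hv w h hvw
  have hlt : s.length < Nat.card V := by
    have := Fintype.ofFinite V
    simpa [Nat.card_eq_fintype_card] using (List.nodup_cons.2 ⟨hw, hs.1⟩).length_le_card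
  obtain ⟨z, hz⟩ := (hs.append_singleton hw
    ⟨v, hvw.symm, fun u hu huv => hv u hu huv.symm⟩).exists_totalDomSeq_append hiso
  exact ⟨w :: z, by simpa using hz⟩
termination_by Nat.card V - s.length

lemma LegalSeq.length_le_grundyTotalDomNum [Finite V] (hiso : NoIsolatedVerts G) {s : List V}
    (hs : LegalSeq G s) : s.length ≤ grundyTotalDomNum G := by
  have := Fintype.ofFinite V
  obtain ⟨z, hz⟩ := hs.exists_totalDomSeq_append hiso
  calc s.length ≤ (s ++ z).length := by simp
    _ ≤ grundyTotalDomNum G :=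
      le_csSup ⟨Fintype.card V, by rintro _ ⟨t, ht, rfl⟩; exact ht.1.1.length_le_card⟩
        ⟨s ++ z, hz, rfl⟩

end LegalSeq

section TotalDomNum

lemma totalDomNum_le_ncard {A : Set V} (hA : TotalDomSet G A) : totalDomNum G ≤ A.ncard :=
  Nat.sInf_le ⟨A, hA, rfl⟩

lemma exists_totalDomSet_ncard_eq (hiso : NoIsolatedVerts G) :
    ∃ D, TotalDomSet G D ∧ D.ncard = totalDomNum G :=
  Nat.sInf_mem (s := {n | ∃ A : Set V, TotalDomSet G A ∧ A.ncard = n})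
    ⟨_, Set.univ, fun v => (hiso v).imp fun w hw => ⟨Set.mem_univ w, hw⟩, rfl⟩

lemma TotalDomSet.hasUndominatedNeighbor_of_ncard_eq [Finite V] {D : Set V}
    (hD : TotalDomSet G D) (hDmin : D.ncard = totalDomNum G) {e : V} (he : e ∈ D) :
    HasUndominatedNeighbor G (D \ {e}) e := by
  by_contra h
  have hT : TotalDomSet G (D \ {e}) := hD.of_forall_not_hasUndominatedNeighbor fun a ha haS => by
    obtain rfl : a = e := by simpa [ha] using haS
    exact h
  have hle := totalDomNum_le_ncard hT
  have hpos : 0 < D.ncard := (Set.ncard_pos (Set.toFinite D)).2 ⟨e, he⟩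
  rw [Set.ncard_sdiff_singleton_of_mem he] at hle
  omega

end TotalDomNum

/-- In the legal sequence built from `x` and `D` in `TotalKUniform.isLeaf_of_not_mem`, these
vertices are placed right after `x`. -/
def privatelyLinked (G : SimpleGraph V) (D : Set V) (x : V) : Set V :=
  {e ∈ D | ∃ w, G.Adj x w ∧ G.Adj e w ∧ ∀ u ∈ D, G.Adj u w → u = e}

lemma TotalDomSet.exists_hasUndominatedNeighbor_of_subset_diff [Finite V] {D : Set V}
    (hD : TotalDomSet G D) (hDmin : D.ncard = totalDomNum G) {x : V} {T : Set V}
    (hT : T ⊆ D \ privatelyLinked G D x) (hTne : T.Nonempty) :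
    ∃ e ∈ T, HasUndominatedNeighbor G (insert x (D \ T)) e := by
  by_contra! hstuck
  have hTD : T ⊆ D := hT.trans Set.sdiff_subset
  have hS : TotalDomSet G (insert x (D \ T)) :=
    hD.of_forall_not_hasUndominatedNeighbor fun e he heS =>
      hstuck e (by by_contra h; exact heS (Or.inr ⟨he, h⟩))
  have hk := totalDomNum_le_ncard hS
  have hins := Set.ncard_insert_le x (D \ T)
  have hdiff := Set.ncard_sdiff hTD (Set.toFinite T)
  have hpos := (Set.ncard_pos (Set.toFinite T)).2 hTne
  have hle := Set.ncard_le_ncard hTD (Set.toFinite D)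
  obtain ⟨e, rfl⟩ := Set.ncard_eq_one.1 (by omega : T.ncard = 1)
  obtain ⟨w, hew, hw⟩ :=
    hD.hasUndominatedNeighbor_of_ncard_eq hDmin (hTD rfl)
  -- `e`'s private neighbour `w` can only be dominated by `x`
  refine (hT rfl).2 ⟨hTD rfl, w, ?_, hew, fun u hu huw => ?_⟩
  · by_contra hxw
    exact hstuck e rfl ⟨w, hew, by rintro u (rfl | hu); exacts [hxw, hw u hu]⟩
  · by_contra hue
    exact hw u ⟨hu, hue⟩ huw

namespace TotalKUniform

variable [Finite V] {k : ℕ}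

lemma length_le_of_legalSeq (huni : TotalKUniform G k) (hiso : NoIsolatedVerts G) {s : List V}
    (hs : LegalSeq G s) : s.length ≤ k :=
  huni.2 ▸ hs.length_le_grundyTotalDomNum hiso

lemma neighborSet_eq_of_subset (huni : TotalKUniform G k) (hiso : NoIsolatedVerts G) {u v : V}
    (hsub : G.neighborSet u ⊆ G.neighborSet v) : G.neighborSet u = G.neighborSet v := by
  refine hsub.antisymm fun t hvt => ?_
  by_contra hut
  have huv : u ≠ v := by rintro rfl; exact hut hvt
  have hs : LegalSeq G [u, v] :=
    (legalSeq_singleton u).append_singleton (by simpa using huv.symm)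
      ⟨t, hvt, by simpa using hut⟩
  obtain ⟨z, hz⟩ := hs.exists_totalDomSeq_append hiso
  have hT : TotalDomSet G ({a | a ∈ [u, v] ++ z} \ {u}) :=
    hz.2.of_forall_not_hasUndominatedNeighbor fun e he heS ⟨w, hew, hw⟩ => by
      obtain rfl : e = u := by_contra fun hne => heS ⟨he, hne⟩
      exact hw v (by simpa using huv.symm) (hsub hew)
  have hk := huni.1 ▸ totalDomNum_le_ncard hT
  have hlen := huni.length_le_of_legalSeq hiso hz.1
  have hcard := ncard_setOf_mem_le ([u, v] ++ z)
  rw [Set.ncard_sdiff_singleton_of_mem (by simp)] at hk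
  simp only [List.length_append, List.length_cons, List.length_nil] at hlen hcard
  omega

lemma neighborSet_eq_singleton_of_adj (huni : TotalKUniform G k) (hiso : NoIsolatedVerts G)
    {ℓ c t : V} (hℓ : G.neighborSet ℓ = {c}) (htc : G.Adj t c) : G.neighborSet t = {c} := by
  have hsub : G.neighborSet ℓ ⊆ G.neighborSet t := by simpa [hℓ] using htc
  rw [← huni.neighborSet_eq_of_subset hiso hsub, hℓ]

lemma not_neighborSet_subset (huni : TotalKUniform G k) (hiso : NoIsolatedVerts G)
    (hg : 4 < G.egirth) {e x : V} (hex : e ≠ x) (hxl : ¬ IsLeaf G x) :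
    ¬ G.neighborSet e ⊆ G.neighborSet x := by
  intro hsub
  have heq := huni.neighborSet_eq_of_subset hiso hsub
  obtain ⟨w, hew⟩ := hiso e
  have hxw : G.Adj x w := by rw [← mem_neighborSet, ← heq]; exact hew
  obtain ⟨w', hxw', hw'w⟩ := exists_adj_ne_of_neighborSet_ne hxw fun h => hxl ⟨w, h⟩
  have hew' : G.Adj e w' := by rw [← mem_neighborSet, heq]; exact hxw'
  exact hg.not_ge (egirth_le_four hew hxw.symm hxw' hew'.symm hex hw'w.symm)

lemma exists_hasUndominatedNeighbor_of_subset_privatelyLinked (huni : TotalKUniform G k)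
    (hiso : NoIsolatedVerts G) (hg : 6 < G.egirth) {D : Set V} {x : V} (hx : x ∉ D)
    (hxl : ¬ IsLeaf G x) {T : Set V} (hT : T ⊆ privatelyLinked G D x) (hTne : T.Nonempty) :
    ∃ e ∈ T, HasUndominatedNeighbor G (insert x (privatelyLinked G D x \ T)) e := by
  by_contra! hstuck
  obtain ⟨e, heT⟩ := hTne
  obtain ⟨heD, we, hxwe, hewe, hwe⟩ := hT heT
  obtain ⟨t, het, hxt⟩ : ∃ t, G.Adj e t ∧ ¬ G.Adj x t := by
    simpa [Set.subset_def] using huni.not_neighborSet_subset hiso (lt_of_le_of_lt (by norm_num) hg)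
      (ne_of_mem_of_not_mem heD hx) hxl
  obtain ⟨f, ⟨⟨hfD, wf, hxwf, hfwf, hwf⟩, hfT⟩, hft⟩ :
      ∃ f ∈ privatelyLinked G D x \ T, G.Adj f t := by
    by_contra! h
    exact hstuck e heT ⟨t, het, by rintro u (rfl | hu); exacts [hxt, h u hu]⟩
  have hno3 : ∀ {a b c : V}, G.Adj a b → G.Adj b c → G.Adj c a → False :=
    fun hab hbc hca => hg.not_ge ((egirth_le_three hab hbc hca).trans (by norm_num))
  have hxe : ¬ G.Adj x e := fun h => hno3 h hewe hxwe.symm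
  have hxf : ¬ G.Adj x f := fun h => hno3 h hfwf hxwf.symm
  have hef : e ≠ f := by rintro rfl; exact hfT heT
  -- the hexagon `x - we - e - t - f - wf - x`
  refine hg.not_ge (egirth_le_six hxwe hewe.symm het hft.symm hfwf hxwf.symm
    (ne_of_mem_of_not_mem heD hx).symm ?_ (ne_of_mem_of_not_mem hfD hx).symm ?_ ?_ ?_ hef ?_ ?_)
  · rintro rfl; exact hxe het.symm
  · rintro rfl; exact hxt hxwe
  · rintro rfl; exact hxf hxwe
  · rintro rfl; exact hef (hwe f hfD hfwf).symm
  · rintro rfl; exact hxe hxwf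
  · rintro rfl; exact hxt hxwf

lemma isLeaf_of_not_mem (huni : TotalKUniform G k) (hiso : NoIsolatedVerts G)
    (hg : 6 < G.egirth) {D : Set V} (hD : TotalDomSet G D) (hDk : D.ncard = k) {x : V}
    (hx : x ∉ D) : IsLeaf G x := by
  by_contra hxl
  set B := privatelyLinked G D x
  have hBD : B ⊆ D := fun e he => he.1
  obtain ⟨z₁, hz₁, hz₁B⟩ := (legalSeq_singleton x).exists_append (R := B)
    (fun e he => by simpa using ne_of_mem_of_not_mem (hBD he) hx)
    fun T hT hTne => by
      obtain ⟨e, heT, he⟩ :=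
        huni.exists_hasUndominatedNeighbor_of_subset_privatelyLinked hiso hg hx hxl hT hTne
      exact ⟨e, heT,
        he.mono (Set.union_subset (fun a ha => by simp_all) (Set.subset_insert _ _))⟩
  have hmem₁ : ∀ a, a ∈ [x] ++ z₁ ↔ a = x ∨ a ∈ B := by simp [hz₁B]
  obtain ⟨z₂, hz₂, hz₂D⟩ := hz₁.exists_append (R := D \ B)
    (fun e he h => by
      rcases (hmem₁ e).1 h with rfl | heB
      exacts [hx he.1, he.2 heB])
    fun T hT hTne => by
      obtain ⟨e, heT, he⟩ :=
        hD.exists_hasUndominatedNeighbor_of_subset_diff (hDk.trans huni.1.symm) hT hTne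
      refine ⟨e, heT, he.mono ?_⟩
      rintro a (ha | ⟨⟨haD, -⟩, haT⟩)
      · rcases (hmem₁ a).1 ha with rfl | haB
        · exact Or.inl rfl
        · exact Or.inr ⟨hBD haB, fun haT => (hT haT).2 haB⟩
      · exact Or.inr ⟨haD, haT⟩
  have hsub : insert x D ⊆ {a | a ∈ [x] ++ z₁ ++ z₂} := by
    rintro a (rfl | haD)
    · simp
    · by_cases haB : a ∈ B
      · simp [hz₁B, haB]
      · simp [hz₂D, haD, haB]
  have hcard := Set.ncard_le_ncard hsub (Set.toFinite _)
  rw [Set.ncard_insert_of_notMem hx, hDk] at hcard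
  have hlen := huni.length_le_of_legalSeq hiso hz₂
  have := ncard_setOf_mem_le ([x] ++ z₁ ++ z₂)
  omega

lemma isLeaf_or_isLeaf_of_adj (huni : TotalKUniform G k) (hiso : NoIsolatedVerts G)
    (hg : 6 < G.egirth) {u v : V} (huv : G.Adj u v) : IsLeaf G u ∨ IsLeaf G v := by
  refine or_iff_not_imp_left.2 fun hu => ?_
  obtain ⟨D, hD, hDmin⟩ := exists_totalDomSet_ncard_eq hiso
  have hleaf : ∀ y ∉ D, IsLeaf G y :=
    fun y hy => huni.isLeaf_of_not_mem hiso hg hD (hDmin.trans huni.1) hy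
  have huD : u ∈ D := by_contra fun h => hu (hleaf u h)
  obtain ⟨w, huw, hw⟩ := hD.hasUndominatedNeighbor_of_ncard_eq hDmin huD
  -- a second neighbour of `w` would lie outside `D`, hence be a leaf hanging at `w`
  have hwu : G.neighborSet w = {u} := by
    by_contra hne
    obtain ⟨y, hwy, hyu⟩ := exists_adj_ne_of_neighborSet_ne huw.symm hne
    have hyD : y ∉ D := fun hyD => hw y ⟨hyD, hyu⟩ hwy.symm
    exact hu ⟨w, huni.neighborSet_eq_singleton_of_adj hiso
      ((hleaf y hyD).neighborSet_eq hwy.symm) huw⟩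
  exact ⟨u, huni.neighborSet_eq_singleton_of_adj hiso hwu huv.symm⟩

end TotalKUniform

structure IsStarCenterSet (G : SimpleGraph V) (C : Set V) : Prop where
  isIndepSet : G.IsIndepSet C
  neighborSet_eq_of_not_mem : ∀ v ∉ C, ∃ c ∈ C, G.neighborSet v = {c}

lemma exists_isStarCenterSet [Countable V] (h : ∀ u v, G.Adj u v → IsLeaf G u ∨ IsLeaf G v) :
    ∃ C, IsStarCenterSet G C := by
  obtain ⟨ι, hι⟩ := exists_injective_nat V
  -- an edge between two leaves is a `K₂` component; `ι` chooses its centre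
  refine ⟨{v | ¬ IsLeaf G v ∨ ∃ s, G.neighborSet v = {s} ∧ IsLeaf G s ∧ ι v < ι s},
    ?_, ?_⟩
  · intro u hu v hv huv hadj
    wlog hul : IsLeaf G u generalizing u v
    · exact this hv hu huv.symm hadj.symm ((h u v hadj).resolve_left hul)
    obtain ⟨s, hs, hsl, hus⟩ := hu.resolve_left (not_not.2 hul)
    obtain rfl := eq_of_neighborSet_eq_singleton hs hadj
    obtain ⟨s', hs', -, hvs'⟩ := hv.resolve_left (not_not.2 hsl)
    obtain rfl := eq_of_neighborSet_eq_singleton hs' hadj.symm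
    omega
  · intro v hv
    simp only [Set.mem_ofPred_eq, not_or, not_not, not_exists, not_and, not_lt] at hv
    obtain ⟨⟨s, hs⟩, hvs⟩ := hv
    have hadj : G.Adj v s := by simp [← mem_neighborSet, hs]
    refine ⟨s, ?_, hs⟩
    by_cases hsl : IsLeaf G s
    · exact Or.inr ⟨v, hsl.neighborSet_eq hadj.symm, ⟨s, hs⟩,
        (hvs s hs hsl).lt_of_ne (hι.ne hadj.ne')⟩
    · exact Or.inl hsl

namespace IsStarCenterSet

variable {C : Set V}

lemma eq_of_adj_of_adj (hC : IsStarCenterSet G C) {c v a : V} (hc : c ∈ C) (hcv : G.Adj c v)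
    (hva : G.Adj v a) : a = c := by
  have hv : v ∉ C := fun hv => hC.isIndepSet hc hv hcv.ne hcv
  obtain ⟨d, -, hd⟩ := hC.neighborSet_eq_of_not_mem v hv
  rw [eq_of_neighborSet_eq_singleton hd hva, eq_of_neighborSet_eq_singleton hd hcv.symm]

lemma ncard_union_image [Finite V] (hC : IsStarCenterSet G C) {φ : V → V}
    (hφ : ∀ c ∈ C, G.Adj c (φ c)) : (C ∪ φ '' C).ncard = 2 * C.ncard := by
  have hdisj : Disjoint C (φ '' C) := by
    rw [Set.disjoint_right]
    rintro _ ⟨c, hc, rfl⟩ hφc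
    exact hC.isIndepSet hc hφc (hφ c hc).ne (hφ c hc)
  have hinj : Set.InjOn φ C := fun c hc c' hc' h =>
    hC.eq_of_adj_of_adj hc' (hφ c' hc') (by rw [← h]; exact (hφ c hc).symm)
  rw [Set.ncard_union_eq hdisj, hinj.ncard_image, two_mul]

lemma totalDomNum_eq [Finite V] (hiso : NoIsolatedVerts G) (hC : IsStarCenterSet G C) :
    totalDomNum G = 2 * C.ncard := by
  choose φ hφ using hiso
  refine le_antisymm ?_ ?_
  · refine (totalDomNum_le_ncard (A := C ∪ φ '' C) fun v => ?_).trans_eq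
      (hC.ncard_union_image fun c _ => hφ c)
    by_cases hv : v ∈ C
    · exact ⟨φ v, Or.inr ⟨v, hv, rfl⟩, hφ v⟩
    · obtain ⟨c, hc, hvc⟩ := hC.neighborSet_eq_of_not_mem v hv
      exact ⟨c, Or.inl hc, by simp [← mem_neighborSet, hvc]⟩
  · obtain ⟨A, hA, hAmin⟩ := exists_totalDomSet_ncard_eq fun v => ⟨φ v, hφ v⟩
    choose ψ hψA hψ using hA
    -- the leaf `φ c` is dominated only by `c`
    have hCA : C ⊆ A := fun c hc =>
      hC.eq_of_adj_of_adj hc (hφ c) (hψ (φ c)) ▸ hψA (φ c)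
    calc 2 * C.ncard = (C ∪ ψ '' C).ncard := (hC.ncard_union_image fun c _ => hψ c).symm
      _ ≤ A.ncard :=
        Set.ncard_le_ncard (Set.union_subset hCA (by rintro _ ⟨c, -, rfl⟩; exact hψA c))
      _ = totalDomNum G := hAmin

lemma disjUnionStars [Finite V] (hiso : NoIsolatedVerts G) (hC : IsStarCenterSet G C) :
    DisjUnionStars G C.ncard := by
  have hex : ∀ v, ∃ c ∈ C, v = c ∨ G.Adj v c := fun v => by
    by_cases hv : v ∈ C
    · exact ⟨v, hv, Or.inl rfl⟩
    · obtain ⟨c, hc, hvc⟩ := hC.neighborSet_eq_of_not_mem v hv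
      exact ⟨c, hc, Or.inr (by simp [← mem_neighborSet, hvc])⟩
  choose ctr hctrC hctr using hex
  have hctr_of_mem : ∀ c ∈ C, ctr c = c := fun c hc =>
    ((hctr c).resolve_right fun h => hC.isIndepSet hc (hctrC c) h.ne h).symm
  have hctr_of_adj : ∀ {c v}, c ∈ C → G.Adj c v → ctr v = c := fun hc hcv =>
    (hctr _).elim (fun h => absurd (h ▸ hctrC _) fun hv => hC.isIndepSet hc hv hcv.ne hcv)
      (hC.eq_of_adj_of_adj hc hcv)
  let e : C ≃ Fin C.ncard := (Finite.equivFin C).trans (finCongr (Nat.card_coe_set_eq C))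
  refine ⟨fun v => e ⟨ctr v, hctrC v⟩, fun i => e.symm i, fun i => ?_, fun i => ?_,
    fun u v => ?_⟩
  · simp [hctr_of_mem _ (e.symm i).2]
  · obtain ⟨v, hv⟩ := hiso (e.symm i)
    exact ⟨v, by simp [hctr_of_adj (e.symm i).2 hv], hv.ne'⟩
  · simp only [Equiv.symm_apply_apply, e.injective.eq_iff, Subtype.mk.injEq]
    constructor
    · intro huv
      by_cases hu : u ∈ C
      · exact ⟨huv.ne, (hctr_of_mem u hu).trans (hctr_of_adj hu huv).symm,
          Or.inl (hctr_of_mem u hu).symm⟩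
      · obtain ⟨c, hc, huc⟩ := hC.neighborSet_eq_of_not_mem u hu
        obtain rfl := eq_of_neighborSet_eq_singleton huc huv
        exact ⟨huv.ne, (hctr_of_adj hc huv.symm).trans (hctr_of_mem v hc).symm,
          Or.inr (hctr_of_mem v hc).symm⟩
    · rintro ⟨hne, heq, hu | hv⟩
      · have hv := (hctr v).resolve_left (by rw [← heq, ← hu]; exact hne.symm)
        rw [← heq, ← hu] at hv
        exact hv.symm
      · have hu := (hctr u).resolve_left (by rw [heq, ← hv]; exact hne)
        rwa [heq, ← hv] at hu

end IsStarCenterSet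

end

/-- Every total `k`-uniform graph is either the disjoint union of `k/2` stars or has girth at
most 6 (here `egirth = ⊤` for acyclic graphs). -/
theorem stmt_19 {V : Type*} [Finite V] (G : SimpleGraph V) (k : ℕ)
    (hiso : NoIsolatedVerts G) (huni : TotalKUniform G k) :
    (∃ m : ℕ, k = 2 * m ∧ DisjUnionStars G m) ∨ G.egirth ≤ 6 := by
  refine (le_or_gt G.egirth 6).symm.imp (fun hg => ?_) id
  obtain ⟨C, hC⟩ := exists_isStarCenterSet fun u v => huni.isLeaf_or_isLeaf_of_adj hiso hg
  exact ⟨C.ncard, huni.1.symm.trans (hC.totalDomNum_eq hiso), hC.disjUnionStars hiso⟩
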